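/- For all sufficiently large n the following holds on the toroidal grid T_n. Suppose a zombie follows a fixed regular zombie strategy (v_0, σ), and the survivor follows a stable trajectory (u_t)_{t∈[a,b]} with 0 ≤ a < b ≤ 4n, the zombie's positions (v_t) being determined by the rule that at each time step t the zombie at v_{t-1} moves to v_t = v_{t-1} + α, where α is the first direction in the ordering σ_t such that d(v_{t-1}+α, u_{t-1}) < d(v_{t-1}, u_{t-1}). If d(v_a, u_a) = d for some d ∈ {2, 3} and d(v_{a+1}, u_{a+1}) = d (that is, the survivor's first move is not towards the zombie), then d(v_t, u_t) = d for all t ∈ [a, b]. -/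
import Mathlib


/-- The four directions `R, L, U, D` on the toroidal grid, as elements of
`(ℤ/nℤ) × (ℤ/nℤ)`. -/
def dir4 (n : ℕ) : Fin 4 → ZMod n × ZMod n := ![(1, 0), (-1, 0), (0, 1), (0, -1)]

/-- The `n × n` toroidal grid: the graph on `(ℤ/nℤ) × (ℤ/nℤ)` where two vertices
are adjacent iff they differ by one of the four unit directions. -/
def torusGraph (n : ℕ) : SimpleGraph (ZMod n × ZMod n) :=
  SimpleGraph.fromRel fun x y => ∃ j : Fin 4, y = x + dir4 n j

/-- `u` is a trajectory on the time interval `[a,b]`: each step moves by one of the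
four unit directions. -/
def IsTrajectory (n a b : ℕ) (u : ℕ → ZMod n × ZMod n) : Prop :=
  ∀ t, a ≤ t → t < b → ∃ j : Fin 4, u (t + 1) = u t + dir4 n j

/-- `j` is a turning point of the trajectory `u` on `[a,b]`: the direction changes at
time-step `j+1`; by convention the endpoints `a` and `b` are also (proper) turning
points. -/
def IsTurningPoint (n a b : ℕ) (u : ℕ → ZMod n × ZMod n) (j : ℕ) : Prop :=
  j = a ∨ j = b ∨ (a < j ∧ j < b ∧ u j - u (j - 1) ≠ u (j + 1) - u j)

/-- A trajectory on `[a,b]` is stable if every interior turning point is proper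
(no 180° turn) and any two distinct turning points (endpoints included) are at least
`⌊20 ln n⌋` steps apart. -/
def IsStable (n a b : ℕ) (u : ℕ → ZMod n × ZMod n) : Prop :=
  (∀ j, a < j → j < b → u j - u (j - 1) ≠ u (j + 1) - u j →
    u j - u (j - 1) ≠ -(u (j + 1) - u j)) ∧
  (∀ j j', IsTurningPoint n a b u j → IsTurningPoint n a b u j' → j < j' →
    j + ⌊(20 : ℝ) * Real.log n⌋₊ ≤ j')

/-- A zombie strategy `(v₀, σ)` (with `σ t` the ordering of the four directions used
at step `t`, its first symbol being `σ t 0`) is regular if for every direction `α`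
and every interval of `⌊20 ln n⌋` consecutive steps contained in `[1, 4n]`, there
are at least `⌈ln n⌉` steps `i` in the interval with first symbol `α`. -/
def IsRegularStrategy (n : ℕ) (σ : ℕ → Equiv.Perm (Fin 4)) : Prop :=
  ∀ α : Fin 4, ∀ a : ℕ, 1 ≤ a → a + ⌊(20 : ℝ) * Real.log n⌋₊ ≤ 4 * n + 1 →
    ⌈Real.log n⌉₊ ≤
      {i : ℕ | a ≤ i ∧ i < a + ⌊(20 : ℝ) * Real.log n⌋₊ ∧ σ i 0 = α}.ncard

/-- The zombie trajectory `v` follows the strategy `σ` against the survivor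
trajectory `u` on the interval `(a,b]`: at each step `t`, the zombie moves from
`v (t-1)` by the first direction in the ordering `σ t` that strictly decreases its
graph distance to the survivor's position `u (t-1)`. -/
def ZombieFollows (n a b : ℕ) (σ : ℕ → Equiv.Perm (Fin 4))
    (u v : ℕ → ZMod n × ZMod n) : Prop :=
  ∀ t, a < t → t ≤ b → ∃ j : Fin 4,
    (torusGraph n).dist (v (t - 1) + dir4 n (σ t j)) (u (t - 1)) <
      (torusGraph n).dist (v (t - 1)) (u (t - 1)) ∧
    (∀ j' : Fin 4, j' < j →
      ¬ (torusGraph n).dist (v (t - 1) + dir4 n (σ t j')) (u (t - 1)) <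
          (torusGraph n).dist (v (t - 1)) (u (t - 1))) ∧
    v t = v (t - 1) + dir4 n (σ t j)

-- groundwork
def zdir : Fin 4 → ℤ × ℤ := ![(1,0),(-1,0),(0,1),(0,-1)]

def c2 (n : ℕ) (W : ℤ × ℤ) : ZMod n × ZMod n := ((W.1 : ZMod n), (W.2 : ZMod n))

def l1 (W : ℤ × ℤ) : ℕ := W.1.natAbs + W.2.natAbs

def dd (n : ℕ) (z : ZMod n) : ℕ := min z.val (n - z.val)

lemma c2_zdir (n : ℕ) (j : Fin 4) : c2 n (zdir j) = dir4 n j := by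
  fin_cases j <;> simp [c2, zdir, dir4]

lemma c2_add (n : ℕ) (W V : ℤ × ℤ) : c2 n (W + V) = c2 n W + c2 n V := by
  simp [c2, Prod.ext_iff]

lemma c2_neg (n : ℕ) (W : ℤ × ℤ) : c2 n (-W) = -c2 n W := by
  simp [c2, Prod.ext_iff]

lemma c2_sub (n : ℕ) (W V : ℤ × ℤ) : c2 n (W - V) = c2 n W - c2 n V := by
  simp [c2, Prod.ext_iff]

lemma dir4_ne_zero {n : ℕ} (hn : 3 ≤ n) (j : Fin 4) : dir4 n j ≠ 0 := by
  haveI : Fact (1 < n) := ⟨by omega⟩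
  fin_cases j <;> simp [dir4, Prod.ext_iff]

lemma adj_dir {n : ℕ} (hn : 3 ≤ n) (x : ZMod n × ZMod n) (j : Fin 4) :
    (torusGraph n).Adj x (x + dir4 n j) := by
  rw [torusGraph, SimpleGraph.fromRel_adj]
  refine ⟨fun h => dir4_ne_zero hn j ?_, Or.inl ⟨j, rfl⟩⟩
  rw [left_eq_add] at h
  exact h

section Vals
variable {n : ℕ} [NeZero n]

lemma val_add_one (z : ZMod n) : (z + 1).val = if z.val = n - 1 then 0 else z.val + 1 := by
  have hz : ((z.val : ℕ) : ZMod n) = z := ZMod.natCast_rightInverse z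
  have hlt : z.val < n := ZMod.val_lt z
  have hpos : (0:ℕ) < n := Nat.pos_of_ne_zero (NeZero.ne n)
  by_cases h : z.val = n - 1
  · have h1 : ((z.val + 1 : ℕ) : ZMod n) = z + 1 := by push_cast; rw [hz]
    have h2 : z.val + 1 = n := by omega
    rw [← h1, h2, ZMod.natCast_self]; simp [h]
  · have h1 : ((z.val + 1 : ℕ) : ZMod n) = z + 1 := by push_cast; rw [hz]
    rw [← h1, ZMod.val_cast_of_lt (by omega)]; simp [h]

lemma val_sub_one (z : ZMod n) : (z - 1).val = if z.val = 0 then n - 1 else z.val - 1 := by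
  have hz : ((z.val : ℕ) : ZMod n) = z := ZMod.natCast_rightInverse z
  have hlt : z.val < n := ZMod.val_lt z
  have hpos : (0:ℕ) < n := Nat.pos_of_ne_zero (NeZero.ne n)
  by_cases h : z.val = 0
  · have hz0 : z = 0 := (ZMod.val_eq_zero z).mp h
    subst hz0
    have h1 : (0 : ZMod n) - 1 = ((n - 1 : ℕ) : ZMod n) := by
      have : ((n : ℕ) : ZMod n) = 0 := ZMod.natCast_self n
      rw [Nat.cast_sub (by omega), this]; push_cast; ring
    rw [h1, ZMod.val_cast_of_lt (by omega)]
    simp [h]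
  · have h1 : ((z.val - 1 : ℕ) : ZMod n) = z - 1 := by
      rw [Nat.cast_sub (by omega)]; push_cast; rw [hz]
    rw [← h1, ZMod.val_cast_of_lt (by omega)]; simp [h]

lemma dd_zero : dd n 0 = 0 := by simp [dd]

lemma dd_eq_zero {z : ZMod n} (h : dd n z = 0) : z = 0 := by
  have hlt : z.val < n := ZMod.val_lt z
  rw [dd] at h
  have : z.val = 0 := by omega
  exact (ZMod.val_eq_zero z).mp this

lemma dd_lip_add (z : ZMod n) : dd n (z + 1) ≤ dd n z + 1 ∧ dd n z ≤ dd n (z + 1) + 1 := by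
  have h1 := val_add_one z
  have hlt : z.val < n := ZMod.val_lt z
  have h2 : (0:ℕ) < n := Nat.pos_of_ne_zero (NeZero.ne n)
  rw [dd, dd, h1]
  split <;> omega

lemma dd_lip_sub (z : ZMod n) : dd n (z - 1) ≤ dd n z + 1 ∧ dd n z ≤ dd n (z - 1) + 1 := by
  have h1 := val_sub_one z
  have hlt : z.val < n := ZMod.val_lt z
  have h2 : (0:ℕ) < n := Nat.pos_of_ne_zero (NeZero.ne n)
  rw [dd, dd, h1]
  split <;> omega

lemma dd_down_sub {z : ZMod n} (hz : z ≠ 0) (h : 2 * z.val ≤ n) :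
    dd n (z - 1) = dd n z - 1 := by
  have h1 := val_sub_one z
  have hlt : z.val < n := ZMod.val_lt z
  have hv : z.val ≠ 0 := fun hh => hz ((ZMod.val_eq_zero z).mp hh)
  rw [dd, dd, h1, if_neg hv]; omega

lemma dd_down_add {z : ZMod n} (h : n < 2 * z.val) :
    dd n (z + 1) = dd n z - 1 := by
  have h1 := val_add_one z
  have hlt : z.val < n := ZMod.val_lt z
  rw [dd, dd, h1]
  split <;> omega

lemma dd_intCast {k : ℤ} (h2 : 2 * k.natAbs < n) : dd n ((k : ZMod n)) = k.natAbs := by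
  obtain ⟨m, rfl | rfl⟩ := Int.eq_nat_or_neg k
  · simp only [Int.natAbs_natCast] at h2 ⊢
    rw [Int.cast_natCast, dd, ZMod.val_cast_of_lt (by omega)]; omega
  · simp only [Int.natAbs_neg, Int.natAbs_natCast] at h2 ⊢
    rcases Nat.eq_zero_or_pos m with hm | hm
    · subst hm; simp [dd]
    · rw [Int.cast_neg, Int.cast_natCast, dd, ZMod.neg_val,
        if_neg (by
          intro hh
          have := ZMod.val_cast_of_lt (show m < n by omega)
          rw [hh] at this; simp at this; omega),
        ZMod.val_cast_of_lt (by omega)]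
      omega

lemma exists_rep (z : ZMod n) : ∃ k : ℤ, (k : ZMod n) = z ∧ k.natAbs = dd n z := by
  have hz : ((z.val : ℕ) : ZMod n) = z := ZMod.natCast_rightInverse z
  have hlt : z.val < n := ZMod.val_lt z
  by_cases h : 2 * z.val ≤ n
  · exact ⟨(z.val : ℤ), by push_cast [hz]; simp [hz], by rw [dd]; omega⟩
  · refine ⟨(z.val : ℤ) - n, by push_cast; simp [hz], ?_⟩
    rw [dd]
    have : ((z.val : ℤ) - n) = -((n : ℤ) - z.val) := by ring
    rw [this, Int.natAbs_neg]
    omega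

end Vals

section Dist
variable {n : ℕ} (hn : 3 ≤ n)

def dsum (n : ℕ) (x y : ZMod n × ZMod n) : ℕ := dd n (y.1 - x.1) + dd n (y.2 - x.2)

include hn

lemma exists_walk : ∀ (m : ℕ) (x y : ZMod n × ZMod n), dsum n x y = m →
    ∃ w : (torusGraph n).Walk x y, w.length = m := by
  haveI : NeZero n := ⟨by omega⟩
  intro m
  induction m with
  | zero =>
    intro x y h
    rw [dsum] at h
    have h1 : y.1 - x.1 = 0 := dd_eq_zero (by omega)
    have h2 : y.2 - x.2 = 0 := dd_eq_zero (by omega)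
    have : x = y := by
      apply Prod.ext
      · have := sub_eq_zero.mp h1; exact this.symm
      · have := sub_eq_zero.mp h2; exact this.symm
    subst this
    exact ⟨SimpleGraph.Walk.nil, rfl⟩
  | succ m ih =>
    intro x y h
    rw [dsum] at h
    rcases Nat.eq_zero_or_pos (dd n (y.1 - x.1)) with h1 | h1
    · -- move in second coordinate
      have hz : y.2 - x.2 ≠ 0 := by
        intro hz; rw [hz, dd_zero] at h; omega
      by_cases hc : 2 * (y.2 - x.2).val ≤ n
      · -- x' = x + (0,1), y.2 - x'.2 = (y.2 - x.2) - 1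
        obtain ⟨w, hw⟩ := ih (x + dir4 n 2) y (by
          rw [dsum]
          have e1 : y.1 - (x + dir4 n 2).1 = y.1 - x.1 := by simp [dir4]
          have e2 : y.2 - (x + dir4 n 2).2 = (y.2 - x.2) - 1 := by simp [dir4]; ring
          rw [e1, e2, dd_down_sub hz hc]; omega)
        exact ⟨SimpleGraph.Walk.cons (adj_dir hn x 2) w, by simp [hw]⟩
      · obtain ⟨w, hw⟩ := ih (x + dir4 n 3) y (by
          rw [dsum]
          have e1 : y.1 - (x + dir4 n 3).1 = y.1 - x.1 := by simp [dir4]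
          have e2 : y.2 - (x + dir4 n 3).2 = (y.2 - x.2) + 1 := by simp [dir4]; ring
          rw [e1, e2, dd_down_add (by omega)]; omega)
        exact ⟨SimpleGraph.Walk.cons (adj_dir hn x 3) w, by simp [hw]⟩
    · have hz : y.1 - x.1 ≠ 0 := by
        intro hz; rw [hz, dd_zero] at h1; omega
      by_cases hc : 2 * (y.1 - x.1).val ≤ n
      · obtain ⟨w, hw⟩ := ih (x + dir4 n 0) y (by
          rw [dsum]
          have e1 : y.2 - (x + dir4 n 0).2 = y.2 - x.2 := by simp [dir4]
          have e2 : y.1 - (x + dir4 n 0).1 = (y.1 - x.1) - 1 := by simp [dir4]; ring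
          rw [e1, e2, dd_down_sub hz hc]; omega)
        exact ⟨SimpleGraph.Walk.cons (adj_dir hn x 0) w, by simp [hw]⟩
      · obtain ⟨w, hw⟩ := ih (x + dir4 n 1) y (by
          rw [dsum]
          have e1 : y.2 - (x + dir4 n 1).2 = y.2 - x.2 := by simp [dir4]
          have e2 : y.1 - (x + dir4 n 1).1 = (y.1 - x.1) + 1 := by simp [dir4]; ring
          rw [e1, e2, dd_down_add (by omega)]; omega)
        exact ⟨SimpleGraph.Walk.cons (adj_dir hn x 1) w, by simp [hw]⟩

lemma flip_dir (x x' : ZMod n × ZMod n) (j : Fin 4) (h : x = x' + dir4 n j) :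
    ∃ j' : Fin 4, x' = x + dir4 n j' := by
  fin_cases j
  · exact ⟨1, by rw [h]; simp [dir4, Prod.ext_iff]⟩
  · exact ⟨0, by rw [h]; simp [dir4, Prod.ext_iff]⟩
  · exact ⟨3, by rw [h]; simp [dir4, Prod.ext_iff]⟩
  · exact ⟨2, by rw [h]; simp [dir4, Prod.ext_iff]⟩

lemma dsum_lip {x x' y : ZMod n × ZMod n} (h : (torusGraph n).Adj x x') :
    dsum n x y ≤ dsum n x' y + 1 := by
  haveI : NeZero n := ⟨by omega⟩
  rw [torusGraph, SimpleGraph.fromRel_adj] at h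
  have hdir : ∃ j : Fin 4, x' = x + dir4 n j := by
    obtain ⟨-, h | h⟩ := h
    · exact h
    · obtain ⟨j, hj⟩ := h
      exact flip_dir hn x x' j hj
  obtain ⟨j, rfl⟩ := hdir
  fin_cases j
  · show dsum n x y ≤ dsum n (x + dir4 n 0) y + 1
    have e1 : y.1 - x.1 = (y.1 - (x + dir4 n 0).1) + 1 := by simp [dir4]; ring
    have e2 : y.2 - (x + dir4 n 0).2 = y.2 - x.2 := by simp [dir4]
    have e := (dd_lip_add (y.1 - (x + dir4 n 0).1)).1
    rw [dsum, dsum, e2, e1]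
    omega
  · show dsum n x y ≤ dsum n (x + dir4 n 1) y + 1
    have e1 : y.1 - x.1 = (y.1 - (x + dir4 n 1).1) - 1 := by simp [dir4]; ring
    have e2 : y.2 - (x + dir4 n 1).2 = y.2 - x.2 := by simp [dir4]
    have e := (dd_lip_sub (y.1 - (x + dir4 n 1).1)).1
    rw [dsum, dsum, e2, e1]
    omega
  · show dsum n x y ≤ dsum n (x + dir4 n 2) y + 1
    have e1 : y.2 - x.2 = (y.2 - (x + dir4 n 2).2) + 1 := by simp [dir4]; ring
    have e2 : y.1 - (x + dir4 n 2).1 = y.1 - x.1 := by simp [dir4]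
    have e := (dd_lip_add (y.2 - (x + dir4 n 2).2)).1
    rw [dsum, dsum, e2, e1]
    omega
  · show dsum n x y ≤ dsum n (x + dir4 n 3) y + 1
    have e1 : y.2 - x.2 = (y.2 - (x + dir4 n 3).2) - 1 := by simp [dir4]; ring
    have e2 : y.1 - (x + dir4 n 3).1 = y.1 - x.1 := by simp [dir4]
    have e := (dd_lip_sub (y.2 - (x + dir4 n 3).2)).1
    rw [dsum, dsum, e2, e1]
    omega

lemma walk_lb : ∀ {x y : ZMod n × ZMod n} (w : (torusGraph n).Walk x y),
    dsum n x y ≤ w.length := by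
  intro x y w
  induction w with
  | nil =>
    haveI : NeZero n := ⟨by omega⟩
    simp [dsum, dd_zero]
  | @cons p q r h w ih =>
    have h2 : dsum n p r ≤ dsum n q r + 1 := dsum_lip hn h
    simp only [SimpleGraph.Walk.length_cons]
    omega

lemma distForm (x y : ZMod n × ZMod n) : (torusGraph n).dist x y = dsum n x y := by
  obtain ⟨w, hw⟩ := exists_walk hn (dsum n x y) x y rfl
  refine le_antisymm (hw ▸ SimpleGraph.dist_le w) ?_
  have hr : (torusGraph n).Reachable x y := ⟨w⟩
  obtain ⟨p, hp⟩ := hr.exists_walk_length_eq_dist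
  rw [← hp]
  exact walk_lb hn p

lemma tdist (x : ZMod n × ZMod n) (W : ℤ × ℤ) (h : 2 * l1 W < n) :
    (torusGraph n).dist x (x + c2 n W) = l1 W := by
  haveI : NeZero n := ⟨by omega⟩
  rw [distForm hn, dsum]
  have e1 : (x + c2 n W).1 - x.1 = ((W.1 : ZMod n)) := by simp [c2]
  have e2 : (x + c2 n W).2 - x.2 = ((W.2 : ZMod n)) := by simp [c2]
  rw [e1, e2, dd_intCast (by unfold l1 at h; omega), dd_intCast (by unfold l1 at h; omega)]
  rfl

end Dist

-- integer side
def IsUD (E : ℤ × ℤ) : Prop := E = (1,0) ∨ E = (-1,0) ∨ E = (0,1) ∨ E = (0,-1)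

def ip (W E : ℤ × ℤ) : ℤ := W.1 * E.1 + W.2 * E.2
def pq (W E : ℤ × ℤ) : ℤ := -(W.1 * E.2) + W.2 * E.1
def pv (E : ℤ × ℤ) (η : ℤ) : ℤ × ℤ := (-(η * E.2), η * E.1)

lemma zdir_UD (j : Fin 4) : IsUD (zdir j) := by
  fin_cases j <;> simp [IsUD, zdir]

lemma UD_exists {V : ℤ × ℤ} (h : IsUD V) : ∃ j : Fin 4, zdir j = V := by
  rcases h with rfl | rfl | rfl | rfl
  exacts [⟨0, rfl⟩, ⟨1, rfl⟩, ⟨2, rfl⟩, ⟨3, rfl⟩]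

lemma pv_UD {E : ℤ × ℤ} (hE : IsUD E) {η : ℤ} (hη : η = 1 ∨ η = -1) : IsUD (pv E η) := by
  rcases hE with rfl | rfl | rfl | rfl <;> rcases hη with rfl | rfl <;> simp [IsUD, pv]

lemma l1_pq_bound {W E : ℤ × ℤ} (hE : IsUD E) : (pq W E).natAbs ≤ l1 W := by
  rcases hE with rfl | rfl | rfl | rfl <;> simp [pq, l1] <;> omega

set_option maxHeartbeats 1000000 in
lemma num_step (E A : ℤ × ℤ) (hE : IsUD E) (hA : IsUD A) (η : ℤ) (hη : η = 1 ∨ η = -1)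
    (W : ℤ × ℤ) (d : ℕ) (hd : l1 W = d) (hdec : l1 (W - A) < d) (hq : 0 ≤ ip W E)
    (hs : 0 ≤ η * pq W E) :
    l1 (W - A + E) = d ∧ ip W E ≤ ip (W - A + E) E ∧ 0 ≤ η * pq (W - A + E) E ∧
    (pq (W - A + E) E).natAbs ≤ (pq W E).natAbs ∧
    (pq W E = 0 → pq (W - A + E) E = 0) ∧
    (A = pv E η → pq W E ≠ 0 → (pq (W - A + E) E).natAbs < (pq W E).natAbs) := by
  rcases hE with rfl | rfl | rfl | rfl <;> rcases hA with rfl | rfl | rfl | rfl <;>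
    rcases hη with rfl | rfl <;>
    simp only [l1, ip, pq, pv, Prod.fst_add, Prod.snd_add, Prod.fst_sub, Prod.snd_sub,
      Prod.mk.injEq] at hd hdec hq hs ⊢ <;> omega

lemma num_beta (E : ℤ × ℤ) (hE : IsUD E) (η : ℤ) (hη : η = 1 ∨ η = -1) (W : ℤ × ℤ)
    (hq : 0 ≤ ip W E) (hs : 0 ≤ η * pq W E) (hne : pq W E ≠ 0) :
    l1 (W - pv E η) < l1 W := by
  rcases hE with rfl | rfl | rfl | rfl <;> rcases hη with rfl | rfl <;>
    simp only [l1, ip, pq, pv, Prod.fst_sub, Prod.snd_sub, ]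
      at hq hs hne ⊢ <;> norm_num at hq hs hne ⊢ <;> omega

lemma num_start (E X : ℤ × ℤ) (hE : IsUD E) (d : ℕ) (hX : l1 X < d) (hXE : l1 (X + E) = d) :
    0 ≤ ip (X + E) E := by
  rcases hE with rfl | rfl | rfl | rfl <;>
    simp only [l1, ip, Prod.fst_add, Prod.snd_add, ]
      at hX hXE ⊢ <;> norm_num at hX hXE ⊢ <;> omega

lemma num_align (E E' W : ℤ × ℤ) (hE : IsUD E) (hE' : IsUD E')
    (hperp : ip E E' = 0) (hpq : pq W E = 0) : ip W E' = 0 := by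
  rcases hE with rfl | rfl | rfl | rfl <;> rcases hE' with rfl | rfl | rfl | rfl <;>
    simp only [l1, ip, pq, ] at hperp hpq ⊢ <;> omega

lemma num_perp (E E' : ℤ × ℤ) (hE : IsUD E) (hE' : IsUD E') (h1 : E' ≠ E) (h2 : E' ≠ -E) :
    ip E E' = 0 := by
  rcases hE with rfl | rfl | rfl | rfl <;> rcases hE' with rfl | rfl | rfl | rfl <;>
    simp_all [ip, Prod.ext_iff] <;> omega

lemma l1_sub_UD {W A : ℤ × ℤ} (hA : IsUD A) : l1 (W - A) ≤ l1 W + 1 := by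
  rcases hA with rfl | rfl | rfl | rfl <;>
    simp only [l1, Prod.fst_sub, Prod.snd_sub] <;> omega

lemma l1_add_UD {W A : ℤ × ℤ} (hA : IsUD A) : l1 (W + A) ≤ l1 W + 1 := by
  rcases hA with rfl | rfl | rfl | rfl <;>
    simp only [l1, Prod.fst_add, Prod.snd_add] <;> omega

section Main

variable {n : ℕ} {σ : ℕ → Equiv.Perm (Fin 4)} {u v : ℕ → ZMod n × ZMod n} {a b d : ℕ}

lemma step_core (hn : 100 ≤ n) (hZF : ZombieFollows n a b σ u v) (hd3 : d ≤ 3)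
    (t : ℕ) (ht1 : a < t + 1) (ht2 : t + 1 ≤ b)
    (E : ℤ × ℤ) (hE : IsUD E) (hstep : u (t + 1) = u t + c2 n E)
    (η : ℤ) (hη : η = 1 ∨ η = -1) (βj : Fin 4) (hβ : zdir βj = pv E η)
    (W : ℤ × ℤ) (hW : u t - v t = c2 n W) (hl : l1 W = d) (hq : 0 ≤ ip W E)
    (hs : 0 ≤ η * pq W E) :
    ∃ W', u (t + 1) - v (t + 1) = c2 n W' ∧ l1 W' = d ∧ ip W E ≤ ip W' E ∧
      0 ≤ η * pq W' E ∧ (pq W' E).natAbs ≤ (pq W E).natAbs ∧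
      (pq W E = 0 → pq W' E = 0) ∧
      (σ (t + 1) 0 = βj → pq W E ≠ 0 → (pq W' E).natAbs < (pq W E).natAbs) := by
  have hn3 : 3 ≤ n := by omega
  obtain ⟨k, hdec, hmin, hv⟩ := hZF (t + 1) ht1 ht2
  simp only [Nat.add_sub_cancel] at hdec hmin hv
  set A := zdir (σ (t + 1) k) with hAdef
  have hAU : IsUD A := zdir_UD _
  have hut : u t = v t + c2 n W := by rw [← hW]; ring
  have d1 : (torusGraph n).dist (v t) (u t) = l1 W := by
    rw [hut]; exact tdist hn3 _ W (by omega)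
  have hcA : c2 n A = dir4 n (σ (t + 1) k) := c2_zdir n _
  have hutA : u t = (v t + dir4 n (σ (t + 1) k)) + c2 n (W - A) := by
    rw [← hcA, hut, c2_sub]; ring
  have hbWA : l1 (W - A) ≤ l1 W + 1 := l1_sub_UD hAU
  have d2 : (torusGraph n).dist (v t + dir4 n (σ (t + 1) k)) (u t) = l1 (W - A) := by
    rw [hutA]; exact tdist hn3 _ _ (by omega)
  rw [d1, d2, hl] at hdec
  have num := num_step E A hE hAU η hη W d hl hdec hq hs
  refine ⟨W - A + E, ?_, num.1, num.2.1, num.2.2.1, num.2.2.2.1, num.2.2.2.2.1, ?_⟩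
  · rw [hstep, hv, hut, ← hcA, c2_add, c2_sub]; ring
  · intro h0 hne
    have hk : k = 0 := by
      by_contra hk0
      have hkpos : (0 : Fin 4) < k := Fin.pos_of_ne_zero hk0
      have hB : c2 n (pv E η) = dir4 n (σ (t + 1) 0) := by rw [h0, ← hβ]; exact c2_zdir n _
      have hutB : u t = (v t + dir4 n (σ (t + 1) 0)) + c2 n (W - pv E η) := by
        rw [← hB, hut, c2_sub]; ring
      have hbB : l1 (W - pv E η) ≤ l1 W + 1 := l1_sub_UD (pv_UD hE hη)
      have d3 : (torusGraph n).dist (v t + dir4 n (σ (t + 1) 0)) (u t) = l1 (W - pv E η) := by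
        rw [hutB]; exact tdist hn3 _ _ (by omega)
      have := hmin 0 hkpos
      rw [d1, d3] at this
      exact this (num_beta E hE η hη W hq hs hne)
    have hAB : A = pv E η := by rw [hAdef, hk, h0, hβ]
    exact num.2.2.2.2.2 hAB hne

lemma run_lemma (hn : 100 ≤ n) (hZF : ZombieFollows n a b σ u v) (hd3 : d ≤ 3)
    (s j' : ℕ) (has : a + 1 ≤ s) (hsj' : s ≤ j') (hj'b : j' ≤ b)
    (E : ℤ × ℤ) (hE : IsUD E)
    (hdirs : ∀ t, s + 1 ≤ t → t ≤ j' → u t = u (t - 1) + c2 n E)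
    (W0 : ℤ × ℤ) (h0 : u s - v s = c2 n W0) (hl0 : l1 W0 = d) (hq0 : 0 ≤ ip W0 E)
    (hT : ∀ β : Fin 4, ∃ T : Finset ℕ,
      (∀ i ∈ T, s + 1 ≤ i ∧ i ≤ j' ∧ σ i 0 = β) ∧ (pq W0 E).natAbs ≤ T.card) :
    (∀ t, s ≤ t → t ≤ j' → ∃ W, u t - v t = c2 n W ∧ l1 W = d ∧ 0 ≤ ip W E) ∧
    (∃ W, u j' - v j' = c2 n W ∧ l1 W = d ∧ 0 ≤ ip W E ∧ pq W E = 0) := by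
  set η : ℤ := if 0 ≤ pq W0 E then 1 else -1 with hηdef
  have hη : η = 1 ∨ η = -1 := by rw [hηdef]; split <;> simp
  have hs0 : 0 ≤ η * pq W0 E := by rw [hηdef]; split <;> omega
  obtain ⟨βj, hβ⟩ := UD_exists (pv_UD hE hη)
  obtain ⟨T, hTmem, hTcard⟩ := hT βj
  have key : ∀ t, s ≤ t → t ≤ j' →
      ∃ W, u t - v t = c2 n W ∧ l1 W = d ∧ 0 ≤ ip W E ∧ 0 ≤ η * pq W E ∧
        (pq W E = 0 ∨ (pq W E).natAbs + (T.filter (· ≤ t)).card ≤ T.card) := by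
    intro t ht
    induction t, ht using Nat.le_induction with
    | base =>
      intro _
      have hFs : (T.filter (· ≤ s)).card = 0 := by
        rw [Finset.card_eq_zero, Finset.filter_eq_empty_iff]
        intro i hi
        have := (hTmem i hi).1
        omega
      exact ⟨W0, h0, hl0, hq0, hs0, Or.inr (by omega)⟩
    | succ t hst ih =>
      intro ht1
      obtain ⟨W, hW, hl, hq, hsg, hcnt⟩ := ih (by omega)
      have hstep : u (t + 1) = u t + c2 n E := by
        have := hdirs (t + 1) (by omega) ht1
        simpa using this
      obtain ⟨W', hW', hl', hq', hsg', hmono, hzero, hbeta⟩ :=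
        step_core hn hZF hd3 t (by omega) (by omega) E hE hstep η hη βj hβ W hW hl hq hsg
      refine ⟨W', hW', hl', le_trans hq hq', hsg', ?_⟩
      rcases hcnt with hz | hbd
      · exact Or.inl (hzero hz)
      by_cases hmem : t + 1 ∈ T
      · by_cases hz : pq W E = 0
        · exact Or.inl (hzero hz)
        · have hdecr := hbeta (hTmem _ hmem).2.2 hz
          have hsub : T.filter (· ≤ t + 1) ⊆ insert (t + 1) (T.filter (· ≤ t)) := by
            intro x hx
            simp only [Finset.mem_filter] at hx
            simp only [Finset.mem_insert, Finset.mem_filter]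
            rcases Nat.lt_or_ge x (t + 1) with h' | h'
            · exact Or.inr ⟨hx.1, by omega⟩
            · exact Or.inl (by omega)
          have hle : (T.filter (· ≤ t + 1)).card ≤ (T.filter (· ≤ t)).card + 1 :=
            (Finset.card_le_card hsub).trans (Finset.card_insert_le _ _)
          refine Or.inr ?_
          omega
      · have heq : T.filter (· ≤ t + 1) = T.filter (· ≤ t) := by
          ext x
          simp only [Finset.mem_filter]
          constructor
          · rintro ⟨h1, h2⟩
            have hne : x ≠ t + 1 := fun hh => hmem (hh ▸ h1)
            exact ⟨h1, by omega⟩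
          · rintro ⟨h1, h2⟩
            exact ⟨h1, by omega⟩
        rw [heq]
        exact Or.inr (by omega)
  constructor
  · intro t h1 h2
    obtain ⟨W, h, hl, hq, -⟩ := key t h1 h2
    exact ⟨W, h, hl, hq⟩
  · obtain ⟨W, h, hl, hq, -, hcnt⟩ := key j' hsj' le_rfl
    refine ⟨W, h, hl, hq, ?_⟩
    rcases hcnt with hz | hbd
    · exact hz
    · have hfull : T.filter (· ≤ j') = T := by
        apply Finset.filter_true_of_mem
        intro i hi
        exact (hTmem i hi).2.1
      rw [hfull] at hbd
      have : (pq W E).natAbs = 0 := by omega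
      exact Int.natAbs_eq_zero.mp this

lemma outer (hn : 100 ≤ n) (hreg : IsRegularStrategy n σ) (hab : a < b) (hb4 : b ≤ 4 * n)
    (htraj : IsTrajectory n a b u) (hstable : IsStable n a b u)
    (hZF : ZombieFollows n a b σ u v) (hd3 : d ≤ 3)
    (hceil : 4 ≤ ⌈Real.log (n : ℝ)⌉₊) (hfloor : 5 ≤ ⌊(20 : ℝ) * Real.log (n : ℝ)⌋₊) :
    ∀ m j s, b ≤ j + m → IsTurningPoint n a b u j → a ≤ j → j < b →
      ((s = j ∧ a + 1 ≤ j) ∨ (j = a ∧ s = a + 1)) →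
      (∃ E W, IsUD E ∧ u (j + 1) = u j + c2 n E ∧ u s - v s = c2 n W ∧ l1 W = d ∧
        0 ≤ ip W E) →
      ∀ t, s ≤ t → t ≤ b → ∃ W, u t - v t = c2 n W ∧ l1 W = d := by
  intro m
  induction m with
  | zero =>
    intro j s hbm _ _ hjb
    exact absurd hbm (by omega)
  | succ m ih =>
    intro j s hbm hTP haj hjb hso hSI t hts htb
    obtain ⟨E, W0, hE, hEdir, hW0, hl0, hq0⟩ := hSI
    have hs1 : a + 1 ≤ s := by rcases hso with ⟨rfl, h⟩ | ⟨rfl, rfl⟩ <;> omega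
    have hs2 : j ≤ s := by rcases hso with ⟨rfl, h⟩ | ⟨rfl, rfl⟩ <;> omega
    have hs3 : s ≤ j + 1 := by rcases hso with ⟨rfl, h⟩ | ⟨rfl, rfl⟩ <;> omega
    have hbTP : IsTurningPoint n a b u b := Or.inr (Or.inl rfl)
    have hnonempty : {k | j < k ∧ IsTurningPoint n a b u k}.Nonempty := ⟨b, hjb, hbTP⟩
    set j' := sInf {k | j < k ∧ IsTurningPoint n a b u k} with hj'def
    obtain ⟨hjj', hTP'⟩ := Nat.sInf_mem hnonempty
    have hj'b : j' ≤ b := Nat.sInf_le ⟨hjb, hbTP⟩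
    have hgap : j + ⌊(20 : ℝ) * Real.log (n : ℝ)⌋₊ ≤ j' := hstable.2 j j' hTP hTP' hjj'
    have hnoTP : ∀ k, j < k → k < j' → ¬ IsTurningPoint n a b u k := fun k h1 h2 hTPk =>
      Nat.notMem_of_lt_sInf h2 ⟨h1, hTPk⟩
    have hconstSub : ∀ t', j + 1 ≤ t' → (t' ≤ j' → u t' = u (t' - 1) + c2 n E) := by
      intro t' h1
      induction t', h1 using Nat.le_induction with
      | base => intro _; simpa using hEdir
      | succ t' h ihc =>
        intro h2
        have hprev : u t' = u (t' - 1) + c2 n E := ihc (by omega)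
        by_cases hne2 : u (t' + 1) - u t' = c2 n E
        · simp only [Nat.add_sub_cancel]
          rw [← hne2]; ring
        · exfalso
          apply hnoTP t' (by omega) (by omega)
          refine Or.inr (Or.inr ⟨by omega, by omega, ?_⟩)
          have e1 : u t' - u (t' - 1) = c2 n E := by rw [hprev]; ring
          rw [e1]
          exact fun hh => hne2 hh.symm
    have hT : ∀ β : Fin 4, ∃ T : Finset ℕ,
        (∀ i ∈ T, s + 1 ≤ i ∧ i ≤ j' ∧ σ i 0 = β) ∧ (pq W0 E).natAbs ≤ T.card := by
      intro β
      refine ⟨(Finset.Ico (s + 1) (s + ⌊(20 : ℝ) * Real.log (n : ℝ)⌋₊)).filter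
        (fun i => σ i 0 = β), ?_, ?_⟩
      · intro i hi
        simp only [Finset.mem_filter, Finset.mem_Ico] at hi
        exact ⟨hi.1.1, by omega, hi.2⟩
      · have hreg' := hreg β s (by omega) (by omega)
        have hset : {i : ℕ | s ≤ i ∧ i < s + ⌊(20 : ℝ) * Real.log (n : ℝ)⌋₊ ∧ σ i 0 = β} =
            (((Finset.Ico s (s + ⌊(20 : ℝ) * Real.log (n : ℝ)⌋₊)).filter
              (fun i => σ i 0 = β) : Finset ℕ) : Set ℕ) := by
          ext i
          simp [Finset.mem_filter, Finset.mem_Ico, and_assoc]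
        rw [hset, Set.ncard_coe_finset] at hreg'
        have hsub : (Finset.Ico s (s + ⌊(20 : ℝ) * Real.log (n : ℝ)⌋₊)).filter
            (fun i => σ i 0 = β) ⊆
            insert s ((Finset.Ico (s + 1) (s + ⌊(20 : ℝ) * Real.log (n : ℝ)⌋₊)).filter
              (fun i => σ i 0 = β)) := by
          intro x hx
          simp only [Finset.mem_filter, Finset.mem_Ico] at hx
          simp only [Finset.mem_insert, Finset.mem_filter, Finset.mem_Ico]
          rcases Nat.eq_or_lt_of_le hx.1.1 with h | h
          · exact Or.inl h.symm
          · exact Or.inr ⟨⟨by omega, hx.1.2⟩, hx.2⟩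
        have hcard := (Finset.card_le_card hsub).trans (Finset.card_insert_le _ _)
        have hb' : (pq W0 E).natAbs ≤ 3 := le_trans (l1_pq_bound hE) (by omega)
        omega
    obtain ⟨hcover, W1, hW1, hl1', hq1, hpq1⟩ :=
      run_lemma hn hZF hd3 s j' (by omega) (by omega) hj'b E hE
        (fun t' h1 h2 => hconstSub t' (by omega) h2) W0 hW0 hl0 hq0 hT
    rcases le_or_gt t j' with htj' | htj'
    · obtain ⟨W, h1, h2, -⟩ := hcover t hts htj'
      exact ⟨W, h1, h2⟩
    · have hj'b2 : j' < b := by omega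
      obtain ⟨k', hk'⟩ := htraj j' (by omega) hj'b2
      have hE' : IsUD (zdir k') := zdir_UD _
      have hcE' : c2 n (zdir k') = dir4 n k' := c2_zdir n _
      have hTPint : u j' - u (j' - 1) ≠ u (j' + 1) - u j' := by
        rcases hTP' with h | h | h
        · omega
        · omega
        · exact h.2.2
      have hproper := hstable.1 j' (by omega) hj'b2 hTPint
      have hold : u j' - u (j' - 1) = c2 n E := by
        rw [hconstSub j' (by omega) le_rfl]; ring
      have hnew : u (j' + 1) - u j' = c2 n (zdir k') := by rw [hk', hcE']; ring
      rw [hold, hnew] at hTPint hproper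
      have hEne : zdir k' ≠ E := fun hh => hTPint (by rw [hh])
      have hEne2 : zdir k' ≠ -E := by
        intro hh
        apply hproper
        rw [hh, c2_neg]
        ring
      have hperp : ip E (zdir k') = 0 := num_perp E (zdir k') hE hE' hEne hEne2
      have hq' : 0 ≤ ip W1 (zdir k') := by
        rw [num_align E (zdir k') W1 hE hE' hperp hpq1]
      exact ih j' j' (by omega) hTP' (by omega) hj'b2 (Or.inl ⟨rfl, by omega⟩)
        ⟨zdir k', W1, hE', by rw [hk', hcE'], hW1, hl1', hq'⟩ t (by omega) htb

end Main


/-- For all sufficiently large `n`, if a zombie follows a fixed regular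
strategy on the toroidal grid `T_n`, the survivor follows a stable trajectory
`(u_t)_{t ∈ [a,b]}` with `0 ≤ a < b ≤ 4n`, the zombie is at distance `d ∈ {2,3}`
from the survivor at time `a`, and still at distance `d` at time `a+1` (the
survivor's first move is not towards the zombie), then the distance stays exactly
`d` throughout `[a,b]`. -/
theorem stmt_13 : ∃ N : ℕ, ∀ n : ℕ, N ≤ n →
    ∀ (σ : ℕ → Equiv.Perm (Fin 4)) (u v : ℕ → ZMod n × ZMod n) (a b d : ℕ),
      IsRegularStrategy n σ →
      a < b → b ≤ 4 * n →
      IsTrajectory n a b u →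
      IsStable n a b u →
      ZombieFollows n a b σ u v →
      (d = 2 ∨ d = 3) →
      (torusGraph n).dist (v a) (u a) = d →
      (torusGraph n).dist (v (a + 1)) (u (a + 1)) = d →
      ∀ t, a ≤ t → t ≤ b → (torusGraph n).dist (v t) (u t) = d := by
  refine ⟨100, ?_⟩
  intro n hn σ u v a b d hreg hab hb4 htraj hstable hZF hd hda hda1 t hta htb
  have hn3 : 3 ≤ n := by omega
  have hd3 : d ≤ 3 := by rcases hd with rfl | rfl <;> omega
  haveI : NeZero n := ⟨by omega⟩
  have hlog4 : (4 : ℝ) ≤ Real.log (n : ℝ) := by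
    rw [Real.le_log_iff_exp_le (by exact_mod_cast (by omega : 0 < n))]
    have h1 : Real.exp 1 ≤ 2.7182818286 := (Real.exp_one_lt_d9).le
    have h2 : Real.exp 4 = (Real.exp 1) ^ (4 : ℕ) := by
      rw [← Real.exp_nat_mul]; norm_num
    have h3 : (Real.exp 1) ^ (4 : ℕ) ≤ 2.7182818286 ^ (4 : ℕ) :=
      pow_le_pow_left₀ (Real.exp_pos 1).le h1 4
    have h4 : (2.7182818286 : ℝ) ^ (4 : ℕ) ≤ 100 := by norm_num
    have h5 : (100 : ℝ) ≤ (n : ℝ) := by exact_mod_cast hn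
    linarith
  have hceil : 4 ≤ ⌈Real.log (n : ℝ)⌉₊ := by
    have h := Nat.ceil_mono hlog4
    simpa using h
  have hfloor : 5 ≤ ⌊(20 : ℝ) * Real.log (n : ℝ)⌋₊ := by
    apply Nat.le_floor
    push_cast
    linarith
  rcases Nat.eq_or_lt_of_le hta with heq | hta1
  · rw [← heq]; exact hda
  · obtain ⟨k1, hk1, hk1a⟩ := exists_rep ((u a).1 - (v a).1)
    obtain ⟨k2, hk2, hk2a⟩ := exists_rep ((u a).2 - (v a).2)
    have hWa : u a - v a = c2 n (k1, k2) := by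
      simp [c2, Prod.ext_iff, Prod.fst_sub, Prod.snd_sub, hk1, hk2]
    have hlWa : l1 (k1, k2) = d := by
      have h2 : dsum n (v a) (u a) = d := by rw [← distForm hn3, hda]
      rw [dsum] at h2
      simpa [l1, hk1a, hk2a] using h2
    obtain ⟨k0, hk0⟩ := htraj a le_rfl hab
    have hE : IsUD (zdir k0) := zdir_UD _
    have hcE : c2 n (zdir k0) = dir4 n k0 := c2_zdir n _
    obtain ⟨k, hdec, -, hv⟩ := hZF (a + 1) (by omega) hab
    simp only [Nat.add_sub_cancel] at hdec hv
    have hAU : IsUD (zdir (σ (a + 1) k)) := zdir_UD _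
    have hcA : c2 n (zdir (σ (a + 1) k)) = dir4 n (σ (a + 1) k) := c2_zdir n _
    have hut : u a = v a + c2 n (k1, k2) := by rw [← hWa]; ring
    have d1 : (torusGraph n).dist (v a) (u a) = l1 (k1, k2) := by
      rw [hut]; exact tdist hn3 _ _ (by omega)
    have hutA : u a = (v a + dir4 n (σ (a + 1) k)) +
        c2 n ((k1, k2) - zdir (σ (a + 1) k)) := by
      rw [← hcA, hut, c2_sub]; ring
    have hbWA : l1 ((k1, k2) - zdir (σ (a + 1) k)) ≤ l1 (k1, k2) + 1 := l1_sub_UD hAU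
    have d2 : (torusGraph n).dist (v a + dir4 n (σ (a + 1) k)) (u a) =
        l1 ((k1, k2) - zdir (σ (a + 1) k)) := by
      rw [hutA]; exact tdist hn3 _ _ (by omega)
    rw [d1, d2, hlWa] at hdec
    have hW1 : u (a + 1) - v (a + 1) = c2 n ((k1, k2) - zdir (σ (a + 1) k) + zdir k0) := by
      rw [hk0, hv, hut, ← hcA, ← hcE, c2_add, c2_sub]; ring
    have hbW1 : l1 ((k1, k2) - zdir (σ (a + 1) k) + zdir k0) ≤ 4 :=
      le_trans (l1_add_UD hE) (by omega)
    have hlW1 : l1 ((k1, k2) - zdir (σ (a + 1) k) + zdir k0) = d := by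
      have h6 : u (a + 1) = v (a + 1) + c2 n ((k1, k2) - zdir (σ (a + 1) k) + zdir k0) := by
        rw [← hW1]; ring
      have hd1' : (torusGraph n).dist (v (a + 1)) (u (a + 1)) =
          l1 ((k1, k2) - zdir (σ (a + 1) k) + zdir k0) := by
        rw [h6]; exact tdist hn3 _ _ (by omega)
      rw [hd1'] at hda1
      exact hda1
    have hq1 : 0 ≤ ip ((k1, k2) - zdir (σ (a + 1) k) + zdir k0) (zdir k0) :=
      num_start (zdir k0) ((k1, k2) - zdir (σ (a + 1) k)) hE d hdec hlW1
    obtain ⟨W, hWf, hlf⟩ := outer hn hreg hab hb4 htraj hstable hZF hd3 hceil hfloor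
      b a (a + 1) (by omega) (Or.inl rfl) le_rfl hab (Or.inr ⟨rfl, rfl⟩)
      ⟨zdir k0, (k1, k2) - zdir (σ (a + 1) k) + zdir k0, hE, by rw [hk0, hcE], hW1, hlW1, hq1⟩
      t (by omega) htb
    have h7 : u t = v t + c2 n W := by rw [← hWf]; ring
    rw [h7, tdist hn3 _ _ (by omega), hlf]
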